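/- arXiv:2412.19266 — 2 statements merged into one kernel-verified Lean document; each statement's English description precedes it below -/
import Mathlib

section
/- Let (Γ, T, n⊥, n, κ_g, τ_g) be a closed asymptotic curve in ℝ³ and let u be a unit vector such that κ_g(t)·⟨n(t), u⟩ ≠ 0 for all t (equivalently, the planar projection Γ_u has nonvanishing curvature, i.e. no inflections). Then for every point p ∈ ℝ³ there exists t ∈ [0, 2π] with ⟨Γ(t) − p, T(t) × u⟩ = 0; that is, the tangent lines of Γ_u cover the whole plane orthogonal to u, so Γ_u is not locally star-shaped. (Theorem 1.3, Darboux-frame version.) -/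
/-!
Fix `p` and let `h(t) := ⟨Γ(t) - p, n(t)⟩ / ⟨n(t), u⟩`, the parameter at which the plane through
`Γ(t)` orthogonal to `n(t)` meets the line `p + ℝ u`; it is defined because `⟨n, u⟩` never
vanishes, and it is `2π`-periodic. Since `n' = -τ_g (n × T)` and, for unit `n` orthogonal to
`T`, `T × u = ⟨n × T, u⟩ n - ⟨n, u⟩ (n × T)`, one finds
`h' = τ_g ⟨Γ - p, T × u⟩ / ⟨n, u⟩²`. Rolle's theorem on `[0, 2π]` gives a zero of `h'`, and
`τ_g ≠ 0` makes it a zero of `⟨Γ - p, T × u⟩`.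
-/

open Real intervalIntegral

noncomputable section

/-- The cross product on `EuclideanSpace ℝ (Fin 3)`. -/
def cross3 (a b : EuclideanSpace ℝ (Fin 3)) : EuclideanSpace ℝ (Fin 3) :=
  (EuclideanSpace.equiv (Fin 3) ℝ).symm
    (crossProduct ((EuclideanSpace.equiv (Fin 3) ℝ) a) ((EuclideanSpace.equiv (Fin 3) ℝ) b))

open scoped RealInnerProductSpace

open Set

lemma cross3_apply (a b : EuclideanSpace ℝ (Fin 3)) :
    cross3 a b = ![a 1 * b 2 - a 2 * b 1, a 2 * b 0 - a 0 * b 2, a 0 * b 1 - a 1 * b 0] := by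
  simp [cross3, cross_apply]

lemma inner_eq_fin_three (x y : EuclideanSpace ℝ (Fin 3)) :
    ⟪x, y⟫ = x 0 * y 0 + x 1 * y 1 + x 2 * y 2 := by
  simp [PiLp.inner_apply, Fin.sum_univ_three, mul_comm]

lemma cross3_eq_of_norm_eq_one_of_inner_eq_zero {a b : EuclideanSpace ℝ (Fin 3)}
    (ha : ‖a‖ = 1) (hab : ⟪a, b⟫ = 0) (u : EuclideanSpace ℝ (Fin 3)) :
    cross3 b u = ⟪cross3 a b, u⟫ • a - ⟪a, u⟫ • cross3 a b := by
  have haa : ⟪a, a⟫ = 1 := by rw [real_inner_self_eq_norm_sq, ha, one_pow]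
  rw [inner_eq_fin_three] at hab haa
  ext i
  fin_cases i <;> simp [cross3_apply, inner_eq_fin_three]
  · linear_combination (b 2 * u 1 - b 1 * u 2) * haa + (a 1 * u 2 - a 2 * u 1) * hab
  · linear_combination (b 0 * u 2 - b 2 * u 0) * haa + (a 2 * u 0 - a 0 * u 2) * hab
  · linear_combination (b 1 * u 0 - b 0 * u 1) * haa + (a 0 * u 1 - a 1 * u 0) * hab

lemma hasDerivAt_inner_div_inner {Γ n : ℝ → EuclideanSpace ℝ (Fin 3)}
    {T : EuclideanSpace ℝ (Fin 3)} {τ t : ℝ} (p u : EuclideanSpace ℝ (Fin 3))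
    (hΓ : HasDerivAt Γ T t) (hn : HasDerivAt n (-τ • cross3 (n t) T) t) (hn1 : ‖n t‖ = 1)
    (hnT : ⟪n t, T⟫ = 0) (hnu : ⟪n t, u⟫ ≠ 0) :
    HasDerivAt (fun s ↦ ⟪Γ s - p, n s⟫ / ⟪n s, u⟫)
      (τ * ⟪Γ t - p, cross3 T u⟫ / ⟪n t, u⟫ ^ 2) t := by
  have hnum := (hΓ.sub_const p).inner ℝ hn
  have hden := hn.inner ℝ (hasDerivAt_const t u)
  refine (hnum.div hden hnu).congr_deriv ?_
  have hTn : ⟪T, n t⟫ = 0 := by rwa [real_inner_comm]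
  rw [cross3_eq_of_norm_eq_one_of_inner_eq_zero hn1 hnT]
  simp only [inner_sub_right, real_inner_smul_left, real_inner_smul_right, inner_zero_right, hTn]
  ring

theorem stmt1_general
    (Γ n : ℝ → EuclideanSpace ℝ (Fin 3)) (κg τg : ℝ → ℝ)
    (hΓ : ContDiff ℝ 2 Γ) (hΓper : Function.Periodic Γ (2 * π))
    (hn : ContDiff ℝ 1 n) (hnper : Function.Periodic n (2 * π))
    (hn1 : ∀ t, ‖n t‖ = 1)
    (hnT : ∀ t, (inner ℝ (n t) (deriv Γ t) : ℝ) = 0)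
    (hτ : ∀ t, τg t ≠ 0)
    (hDarboux3 : ∀ t, deriv n t = -τg t • cross3 (n t) (deriv Γ t))
    (u : EuclideanSpace ℝ (Fin 3))
    (hinfl : ∀ t, κg t * (inner ℝ (n t) u : ℝ) ≠ 0) :
    ∀ p : EuclideanSpace ℝ (Fin 3), ∃ t ∈ Set.Icc (0 : ℝ) (2 * π),
      (inner ℝ (Γ t - p) (cross3 (deriv Γ t) u) : ℝ) = 0 := by
  intro p
  have hΓd : Differentiable ℝ Γ := hΓ.differentiable (by norm_num)
  have hnd : Differentiable ℝ n := hn.differentiable (by norm_num)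
  have hnu : ∀ t, ⟪n t, u⟫ ≠ 0 := fun t h ↦ hinfl t (by rw [h, mul_zero])
  have hderiv : ∀ t, HasDerivAt (fun s ↦ ⟪Γ s - p, n s⟫ / ⟪n s, u⟫)
      (τg t * ⟪Γ t - p, cross3 (deriv Γ t) u⟫ / ⟪n t, u⟫ ^ 2) t := fun t ↦
    hasDerivAt_inner_div_inner p u (hΓd t).hasDerivAt (hDarboux3 t ▸ (hnd t).hasDerivAt)
      (hn1 t) (hnT t) (hnu t)
  have hperiodic :
      ⟪Γ 0 - p, n 0⟫ / ⟪n 0, u⟫ = ⟪Γ (2 * π) - p, n (2 * π)⟫ / ⟪n (2 * π), u⟫ := by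
    rw [← zero_add (2 * π), hΓper 0, hnper 0]
  obtain ⟨c, hc, hzero⟩ := exists_hasDerivAt_eq_zero (by positivity)
    (fun t _ ↦ (hderiv t).continuousAt.continuousWithinAt) hperiodic (fun t _ ↦ hderiv t)
  refine ⟨c, Ioo_subset_Icc_self hc, ?_⟩
  simpa [hτ c, hnu c] using hzero

/-- Theorem 1.3 (Darboux-frame version): if the projection `Γ_u` has no inflections,
i.e. `κ_g·⟨n, u⟩` never vanishes, then the tangent lines of `Γ_u` cover the whole plane,
so `Γ_u` is not locally star-shaped. -/
theorem stmt1
    (Γ n : ℝ → EuclideanSpace ℝ (Fin 3)) (κg τg : ℝ → ℝ)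
    (hΓ : ContDiff ℝ 2 Γ) (hΓper : Function.Periodic Γ (2 * π))
    (hT1 : ∀ t, ‖deriv Γ t‖ = 1)
    (hn : ContDiff ℝ 1 n) (hnper : Function.Periodic n (2 * π))
    (hn1 : ∀ t, ‖n t‖ = 1)
    (hnT : ∀ t, (inner ℝ (n t) (deriv Γ t) : ℝ) = 0)
    (hκcont : Continuous κg) (hκper : Function.Periodic κg (2 * π))
    (hτcont : Continuous τg) (hτper : Function.Periodic τg (2 * π))
    (hτ : ∀ t, τg t ≠ 0)
    (hDarboux1 : ∀ t, deriv (deriv Γ) t = κg t • cross3 (n t) (deriv Γ t))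
    (hDarboux2 : ∀ t, deriv (fun s => cross3 (n s) (deriv Γ s)) t
      = -κg t • deriv Γ t + τg t • n t)
    (hDarboux3 : ∀ t, deriv n t = -τg t • cross3 (n t) (deriv Γ t))
    (u : EuclideanSpace ℝ (Fin 3)) (hu : ‖u‖ = 1)
    (hinfl : ∀ t, κg t * (inner ℝ (n t) u : ℝ) ≠ 0) :
    ∀ p : EuclideanSpace ℝ (Fin 3), ∃ t ∈ Set.Icc (0 : ℝ) (2 * π),
      (inner ℝ (Γ t - p) (cross3 (deriv Γ t) u) : ℝ) = 0 :=
  stmt1_general Γ n κg τg hΓ hΓper hn hnper hn1 hnT hτ hDarboux3 u hinfl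
end
end

section
/- Let (Γ, T, n⊥, n, κ_g, τ_g) be a closed asymptotic curve in ℝ³ and u a unit vector with ⟨u, n(t)⟩ ≠ 0 for all t. Define h(t) := ⟨Γ(t), n(t)⟩ / ⟨u, n(t)⟩ (the height of the tangent plane along the curve, when the surface is a graph in direction u). Then h is differentiable and for all t: h′(t)·⟨u, n(t)⟩² = τ_g(t)·(⟨Γ(t), n(t)⟩⟨u, n⊥(t)⟩ − ⟨Γ(t), n⊥(t)⟩⟨u, n(t)⟩), and this quantity equals τ_g(t)·⟨Γ(t), T(t) × u⟩. (Petrunin's identity, Note 3.1; the sign convention is fixed by n⊥ = n × T.) -/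
/-!
The quotient rule with `n′ = −τ_g n⊥` and `⟨T, n⟩ = 0` gives the first identity. Its bracket
`⟨Γ,n⟩⟨u,n⊥⟩ − ⟨Γ,n⊥⟩⟨u,n⟩` is `⟨Γ, u × (n × n⊥)⟩` by the triple-product expansion, and
`n × n⊥ = −T` because `n` is a unit vector normal to `T`.
-/

open Real intervalIntegral

noncomputable section

open scoped RealInnerProductSpace

lemma ofLp_cross3 (a b : EuclideanSpace ℝ (Fin 3)) :
    (cross3 a b).ofLp = crossProduct a.ofLp b.ofLp :=
  rfl

lemma cross3_anticomm (a b : EuclideanSpace ℝ (Fin 3)) : -cross3 a b = cross3 b a := by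
  apply WithLp.ofLp_injective
  simp only [WithLp.ofLp_neg, ofLp_cross3, cross_anticomm]

lemma cross3_neg_right (a b : EuclideanSpace ℝ (Fin 3)) : cross3 a (-b) = -cross3 a b := by
  apply WithLp.ofLp_injective
  simp only [WithLp.ofLp_neg, ofLp_cross3, map_neg]

lemma cross3_cross3 (a b c : EuclideanSpace ℝ (Fin 3)) :
    cross3 a (cross3 b c) = ⟪a, c⟫ • b - ⟪a, b⟫ • c := by
  apply WithLp.ofLp_injective
  simp only [ofLp_cross3, cross_cross_eq_smul_sub_smul', WithLp.ofLp_sub, WithLp.ofLp_smul,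
    EuclideanSpace.inner_eq_star_dotProduct, star_trivial, dotProduct_comm]

lemma cross3_cross3_self_of_inner_eq_zero {m T : EuclideanSpace ℝ (Fin 3)} (hmT : ⟪m, T⟫ = 0)
    (hm : ‖m‖ = 1) : cross3 m (cross3 m T) = -T := by
  rw [cross3_cross3, hmT, real_inner_self_eq_norm_sq, hm]
  simp

lemma inner_mul_inner_cross3_sub {m T : EuclideanSpace ℝ (Fin 3)} (hmT : ⟪m, T⟫ = 0)
    (hm : ‖m‖ = 1) (g u : EuclideanSpace ℝ (Fin 3)) :
    ⟪g, m⟫ * ⟪u, cross3 m T⟫ - ⟪g, cross3 m T⟫ * ⟪u, m⟫ = ⟪g, cross3 T u⟫ := by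
  have hframe : ⟪u, cross3 m T⟫ • m - ⟪u, m⟫ • cross3 m T = cross3 T u := by
    rw [← cross3_cross3, cross3_cross3_self_of_inner_eq_zero hmT hm, cross3_neg_right,
      cross3_anticomm]
  rw [← hframe, inner_sub_right, real_inner_smul_right, real_inner_smul_right]
  ring

lemma hasDerivAt_inner_div_inner_s3 {E : Type*} [NormedAddCommGroup E] [InnerProductSpace ℝ E]
    {Γ n : ℝ → E} {T n' : E} {t : ℝ} (hΓ : HasDerivAt Γ T t) (hn : HasDerivAt n n' t)
    (hTn : ⟪T, n t⟫ = 0) (u : E) (hun : ⟪u, n t⟫ ≠ 0) :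
    HasDerivAt (fun s => ⟪Γ s, n s⟫ / ⟪u, n s⟫)
      ((⟪Γ t, n'⟫ * ⟪u, n t⟫ - ⟪Γ t, n t⟫ * ⟪u, n'⟫) / ⟪u, n t⟫ ^ 2) t := by
  have h := (hΓ.inner ℝ hn).div ((hasDerivAt_const t u).inner ℝ hn) hun
  rwa [hTn, inner_zero_left, add_zero, add_zero] at h

theorem stmt3_general
    (Γ n : ℝ → EuclideanSpace ℝ (Fin 3)) (τg : ℝ → ℝ)
    (hΓ : ContDiff ℝ 2 Γ)
    (hn : ContDiff ℝ 1 n)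
    (hn1 : ∀ t, ‖n t‖ = 1)
    (hnT : ∀ t, (inner ℝ (n t) (deriv Γ t) : ℝ) = 0)
    (hDarboux3 : ∀ t, deriv n t = -τg t • cross3 (n t) (deriv Γ t))
    (u : EuclideanSpace ℝ (Fin 3))
    (hun : ∀ t, (inner ℝ u (n t) : ℝ) ≠ 0) :
    ∀ t : ℝ,
      DifferentiableAt ℝ (fun s => (inner ℝ (Γ s) (n s) : ℝ) / (inner ℝ u (n s) : ℝ)) t ∧
      deriv (fun s => (inner ℝ (Γ s) (n s) : ℝ) / (inner ℝ u (n s) : ℝ)) t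
          * (inner ℝ u (n t) : ℝ) ^ 2
        = τg t * ((inner ℝ (Γ t) (n t) : ℝ) * (inner ℝ u (cross3 (n t) (deriv Γ t)) : ℝ)
            - (inner ℝ (Γ t) (cross3 (n t) (deriv Γ t)) : ℝ) * (inner ℝ u (n t) : ℝ)) ∧
      τg t * ((inner ℝ (Γ t) (n t) : ℝ) * (inner ℝ u (cross3 (n t) (deriv Γ t)) : ℝ)
            - (inner ℝ (Γ t) (cross3 (n t) (deriv Γ t)) : ℝ) * (inner ℝ u (n t) : ℝ))
        = τg t * (inner ℝ (Γ t) (cross3 (deriv Γ t) u) : ℝ) := by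
  intro t
  have hT : HasDerivAt Γ (deriv Γ t) t := (hΓ.differentiable (by norm_num) t).hasDerivAt
  have hn' : HasDerivAt n (-τg t • cross3 (n t) (deriv Γ t)) t :=
    hDarboux3 t ▸ (hn.differentiable one_ne_zero t).hasDerivAt
  have hh := hasDerivAt_inner_div_inner_s3 hT hn' (by rw [real_inner_comm, hnT t]) u (hun t)
  refine ⟨hh.differentiableAt, ?_, by rw [inner_mul_inner_cross3_sub (hnT t) (hn1 t)]⟩
  rw [hh.deriv, div_mul_cancel₀ _ (pow_ne_zero 2 (hun t)), real_inner_smul_right,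
    real_inner_smul_right]
  ring

/-- Petrunin's identity (Note 3.1): the height `h = ⟨Γ, n⟩/⟨u, n⟩` of the tangent planes
satisfies `h′·⟨u,n⟩² = τ_g·(⟨Γ,n⟩⟨u,n⊥⟩ − ⟨Γ,n⊥⟩⟨u,n⟩) = τ_g·⟨Γ, T × u⟩`. -/
theorem stmt3
    (Γ n : ℝ → EuclideanSpace ℝ (Fin 3)) (κg τg : ℝ → ℝ)
    (hΓ : ContDiff ℝ 2 Γ) (hΓper : Function.Periodic Γ (2 * π))
    (hT1 : ∀ t, ‖deriv Γ t‖ = 1)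
    (hn : ContDiff ℝ 1 n) (hnper : Function.Periodic n (2 * π))
    (hn1 : ∀ t, ‖n t‖ = 1)
    (hnT : ∀ t, (inner ℝ (n t) (deriv Γ t) : ℝ) = 0)
    (hκcont : Continuous κg) (hκper : Function.Periodic κg (2 * π))
    (hτcont : Continuous τg) (hτper : Function.Periodic τg (2 * π))
    (hτ : ∀ t, τg t ≠ 0)
    (hDarboux1 : ∀ t, deriv (deriv Γ) t = κg t • cross3 (n t) (deriv Γ t))
    (hDarboux2 : ∀ t, deriv (fun s => cross3 (n s) (deriv Γ s)) t
      = -κg t • deriv Γ t + τg t • n t)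
    (hDarboux3 : ∀ t, deriv n t = -τg t • cross3 (n t) (deriv Γ t))
    (u : EuclideanSpace ℝ (Fin 3)) (hu : ‖u‖ = 1)
    (hun : ∀ t, (inner ℝ u (n t) : ℝ) ≠ 0) :
    ∀ t : ℝ,
      DifferentiableAt ℝ (fun s => (inner ℝ (Γ s) (n s) : ℝ) / (inner ℝ u (n s) : ℝ)) t ∧
      deriv (fun s => (inner ℝ (Γ s) (n s) : ℝ) / (inner ℝ u (n s) : ℝ)) t
          * (inner ℝ u (n t) : ℝ) ^ 2
        = τg t * ((inner ℝ (Γ t) (n t) : ℝ) * (inner ℝ u (cross3 (n t) (deriv Γ t)) : ℝ)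
            - (inner ℝ (Γ t) (cross3 (n t) (deriv Γ t)) : ℝ) * (inner ℝ u (n t) : ℝ)) ∧
      τg t * ((inner ℝ (Γ t) (n t) : ℝ) * (inner ℝ u (cross3 (n t) (deriv Γ t)) : ℝ)
            - (inner ℝ (Γ t) (cross3 (n t) (deriv Γ t)) : ℝ) * (inner ℝ u (n t) : ℝ))
        = τg t * (inner ℝ (Γ t) (cross3 (deriv Γ t) u) : ℝ) :=
  stmt3_general Γ n τg hΓ hn hn1 hnT hDarboux3 u hun
end
end
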